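/- arXiv:1512.08157 — 4 statements merged into one kernel-verified Lean document; each statement's English description precedes it below -/
import Mathlib

section
/- Let V and V_* be countably infinite-dimensional vector spaces over a field K with a nondegenerate bilinear pairing p : V × V_* → K. Then there exists a basis {v_α}_{α∈ℕ} of V and a basis {v_α^*}_{α∈ℕ} of V_* such that p(v_α, v_β^*) = δ_{αβ} for all α, β. -/
/-!
Mackey's back-and-forth argument. Call pairs `(vᵢ, wᵢ)`, `i < n`, biorthogonal if
`p vᵢ wⱼ = δᵢⱼ`. Such a system can always be extended by one pair so that a prescribed vector
`x ∈ V` enters the span of the `vᵢ`: replace `x` by its component `v₀ = x - ∑ p x wᵢ • vᵢ`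
annihilated by all `wᵢ` (or, if `x` is already in the span, by any vector outside it, which exists
as `V` is infinite-dimensional); `v₀ ≠ 0`, so nondegeneracy gives `w₀` with `p v₀ w₀ ≠ 0`, and
projecting `w₀` off the `vᵢ` and normalising gives the partner of `v₀`. The symmetric step does
the same for `y ∈ W`. Alternating the two steps along bases of `V` and `W` produces biorthogonal
sequences that span both spaces, and biorthogonal sequences are linearly independent.
-/

open Submodule Set

theorem Submodule.exists_notMem_span_of_not_finite {K V : Type*} [Semiring K] [AddCommMonoid V]
    [Module K V] (hV : ¬Module.Finite K V) {s : Set V} (hs : s.Finite) :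
    ∃ x, x ∉ span K s := by
  by_contra! h
  exact hV ⟨⟨hs.toFinset, by simpa [eq_top_iff'] using h⟩⟩

theorem Fin.range_snoc_val_subset {α : Type*} (f : ℕ → α) (n : ℕ) :
    Set.range (Fin.snoc (α := fun _ => α) (fun i : Fin n => f i) (f n)) ⊆ Set.range f := by
  rw [Fin.range_snoc]
  exact insert_subset_iff.mpr ⟨mem_range_self n, fun _ ⟨i, hi⟩ => ⟨i, hi⟩⟩

namespace LinearMap

variable {K V W ι : Type*} [Field K] [AddCommGroup V] [Module K V] [AddCommGroup W] [Module K W]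
  (p : V →ₗ[K] W →ₗ[K] K)

def IsBiorthogonal [DecidableEq ι] (v : ι → V) (w : ι → W) : Prop :=
  ∀ i j, p (v i) (w j) = if i = j then 1 else 0

variable {p}

section Family

variable [DecidableEq ι] {v : ι → V} {w : ι → W}

theorem IsBiorthogonal.flip (h : p.IsBiorthogonal v w) : p.flip.IsBiorthogonal w v :=
  fun i j => by
  rw [flip_apply, h]
  exact if_congr eq_comm rfl rfl

theorem IsBiorthogonal.sum_smul_apply [Fintype ι] (h : p.IsBiorthogonal v w) (a : ι → K)
    (j : ι) :
    p (∑ i, a i • v i) (w j) = a j := by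
  simp [h _ j]

theorem IsBiorthogonal.apply_sub_sum_smul_left [Fintype ι] (h : p.IsBiorthogonal v w) (x : V)
    (j : ι) :
    p (x - ∑ i, p x (w i) • v i) (w j) = 0 := by
  rw [map_sub, sub_apply, h.sum_smul_apply, sub_self]

theorem IsBiorthogonal.apply_sub_sum_smul_right [Fintype ι] (h : p.IsBiorthogonal v w) (y : W)
    (i : ι) :
    p (v i) (y - ∑ j, p (v j) y • w j) = 0 :=
  h.flip.apply_sub_sum_smul_left y i

theorem IsBiorthogonal.linearIndependent_left (h : p.IsBiorthogonal v w) :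
    LinearIndependent K v := by
  have hpi : (LinearMap.pi fun j => p.flip (w j) : V →ₗ[K] ι → K) ∘ v =
      fun i => Pi.single i 1 := by
    ext i j
    simp [h i j, Pi.single_apply, eq_comm]
  exact .of_comp _ (hpi ▸ Pi.linearIndependent_single_one ι K)

theorem IsBiorthogonal.linearIndependent_right (h : p.IsBiorthogonal v w) : LinearIndependent K w :=
  h.flip.linearIndependent_left

end Family

theorem isBiorthogonal_snoc_iff {n : ℕ} {v : Fin n → V} {w : Fin n → W} {x : V} {y : W} :
    p.IsBiorthogonal (Fin.snoc v x) (Fin.snoc w y) ↔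
      p.IsBiorthogonal v w ∧ p x y = 1 ∧ (∀ j, p x (w j) = 0) ∧ ∀ i, p (v i) y = 0 := by
  simp [IsBiorthogonal, Fin.forall_fin_succ', Fin.castSucc_ne_last, (Fin.castSucc_ne_last _).symm,
    forall_and]
  tauto

section Extension

variable {n : ℕ} {v : Fin n → V} {w : Fin n → W}

theorem IsBiorthogonal.exists_snoc_left (hV : ¬Module.Finite K V) (hp : p.SeparatingLeft)
    (h : p.IsBiorthogonal v w) (x : V) :
    ∃ v' w', p.IsBiorthogonal (Fin.snoc v v') (Fin.snoc w w') ∧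
      x ∈ span K (Set.range (Fin.snoc v v')) := by
  wlog hx : x ∉ span K (Set.range v) generalizing x
  · obtain ⟨x', hx'⟩ := exists_notMem_span_of_not_finite hV (Set.finite_range v)
    obtain ⟨v', w', hvw, -⟩ := this x' hx'
    refine ⟨v', w', hvw, span_mono ?_ (not_not.mp hx)⟩
    simp [subset_insert]
  set v₀ := x - ∑ i, p x (w i) • v i
  have hproj : ∑ i, p x (w i) • v i ∈ span K (Set.range v) :=
    sum_mem fun i _ => smul_mem _ _ (subset_span (Set.mem_range_self i))
  have hv₀w : ∀ j, p v₀ (w j) = 0 := h.apply_sub_sum_smul_left x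
  obtain ⟨w₀, hw₀⟩ : ∃ w₀, p v₀ w₀ ≠ 0 := by
    by_contra! hv₀
    exact hx (sub_eq_zero.mp (hp v₀ hv₀) ▸ hproj)
  refine ⟨v₀, (p v₀ w₀)⁻¹ • (w₀ - ∑ j, p (v j) w₀ • w j),
    isBiorthogonal_snoc_iff.mpr ⟨h, ?_, hv₀w, fun i => ?_⟩, ?_⟩
  · simp [hv₀w, hw₀]
  · rw [map_smul, h.apply_sub_sum_smul_right, smul_zero]
  · rw [Fin.range_snoc, ← sub_add_cancel x (∑ i, p x (w i) • v i)]
    exact add_mem (subset_span (mem_insert _ _)) (span_mono (subset_insert _ _) hproj)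

theorem IsBiorthogonal.exists_snoc_right (hW : ¬Module.Finite K W) (hp : p.SeparatingRight)
    (h : p.IsBiorthogonal v w) (y : W) :
    ∃ v' w', p.IsBiorthogonal (Fin.snoc v v') (Fin.snoc w w') ∧
      y ∈ span K (Set.range (Fin.snoc w w')) := by
  obtain ⟨w', v', hwv, hy⟩ := h.flip.exists_snoc_left hW (flip_separatingLeft.mpr hp) y
  exact ⟨v', w', by simpa using hwv.flip, hy⟩

end Extension

variable (p) in
def IsBiorthogonalExtension {n : ℕ} (v : Fin n → V) (w : Fin n → W) (s : V ⊕ W)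
    (q : V × W) : Prop :=
  p.IsBiorthogonal (Fin.snoc v q.1) (Fin.snoc w q.2) ∧
    s.elim (· ∈ span K (Set.range (Fin.snoc v q.1))) (· ∈ span K (Set.range (Fin.snoc w q.2)))

theorem IsBiorthogonal.exists_isBiorthogonalExtension {n : ℕ} {v : Fin n → V} {w : Fin n → W}
    (hV : ¬Module.Finite K V) (hW : ¬Module.Finite K W) (hp : p.Nondegenerate)
    (h : p.IsBiorthogonal v w) (s : V ⊕ W) : ∃ q, p.IsBiorthogonalExtension v w s q := by
  rcases s with x | y
  · obtain ⟨v', w', hvw, hx⟩ := h.exists_snoc_left hV hp.1 x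
    exact ⟨(v', w'), hvw, hx⟩
  · obtain ⟨v', w', hvw, hy⟩ := h.exists_snoc_right hW hp.2 y
    exact ⟨(v', w'), hvw, hy⟩

variable (p) in
/-- The `n`-th pair is chosen by `Classical.epsilon`, which has the extension property as soon as
some extension exists; hence the definition needs no proof that the earlier pairs are
biorthogonal. -/
noncomputable def dualSeq (t : ℕ → V ⊕ W) : ℕ → V × W
  | n => Classical.epsilon <| p.IsBiorthogonalExtension
      (fun i : Fin n => (dualSeq t i).1) (fun i : Fin n => (dualSeq t i).2) (t n)

theorem isBiorthogonalExtension_dualSeq (hV : ¬Module.Finite K V) (hW : ¬Module.Finite K W)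
    (hp : p.Nondegenerate) (t : ℕ → V ⊕ W) {n : ℕ}
    (h : p.IsBiorthogonal (fun i : Fin n => (p.dualSeq t i).1)
      (fun i : Fin n => (p.dualSeq t i).2)) :
    p.IsBiorthogonalExtension (fun i : Fin n => (p.dualSeq t i).1)
      (fun i : Fin n => (p.dualSeq t i).2) (t n) (p.dualSeq t n) := by
  rw [dualSeq]
  exact Classical.epsilon_spec (h.exists_isBiorthogonalExtension hV hW hp (t n))

theorem isBiorthogonal_dualSeq_fin (hV : ¬Module.Finite K V) (hW : ¬Module.Finite K W)
    (hp : p.Nondegenerate) (t : ℕ → V ⊕ W) : ∀ n,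
    p.IsBiorthogonal (fun i : Fin n => (p.dualSeq t i).1) (fun i : Fin n => (p.dualSeq t i).2)
  | 0 => fun i => i.elim0
  | n + 1 => by
    have h := (isBiorthogonalExtension_dualSeq hV hW hp t
      (isBiorthogonal_dualSeq_fin hV hW hp t n)).1
    exact Fin.snoc_init_self (fun i : Fin (n + 1) => (p.dualSeq t i).1) ▸
      Fin.snoc_init_self (fun i : Fin (n + 1) => (p.dualSeq t i).2) ▸ h

theorem isBiorthogonal_of_forall_fin {v : ℕ → V} {w : ℕ → W}
    (h : ∀ n, p.IsBiorthogonal (fun i : Fin n => v i) (fun i : Fin n => w i)) :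
    p.IsBiorthogonal v w := fun i j => by
  simpa [Fin.ext_iff] using h (max i j + 1) ⟨i, by omega⟩ ⟨j, by omega⟩

variable (p) in
theorem exists_isBiorthogonal_forall_mem_span (hV : ¬Module.Finite K V)
    (hW : ¬Module.Finite K W) (hp : p.Nondegenerate) (a : ℕ → V) (b : ℕ → W) :
    ∃ (v : ℕ → V) (w : ℕ → W), p.IsBiorthogonal v w ∧
      span K (Set.range a) ≤ span K (Set.range v) ∧
        span K (Set.range b) ≤ span K (Set.range w) := by
  set t : ℕ → V ⊕ W := Sum.map a b ∘ Equiv.natSumNatEquivNat.symm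
  set v := fun k => (p.dualSeq t k).1
  set w := fun k => (p.dualSeq t k).2
  have hfin := isBiorthogonal_dualSeq_fin hV hW hp t
  have hcov (n : ℕ) : (t n).elim (· ∈ span K (Set.range v)) (· ∈ span K (Set.range w)) := by
    have hn := (isBiorthogonalExtension_dualSeq hV hW hp t (hfin n)).2
    rcases ht : t n with x | y <;> rw [ht] at hn
    · exact span_mono (Fin.range_snoc_val_subset v n) hn
    · exact span_mono (Fin.range_snoc_val_subset w n) hn
  refine ⟨v, w, isBiorthogonal_of_forall_fin hfin, span_le.mpr (range_subset_iff.mpr fun m => ?_),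
    span_le.mpr (range_subset_iff.mpr fun m => ?_)⟩
  · simpa [t] using hcov (Equiv.natSumNatEquivNat (.inl m))
  · simpa [t] using hcov (Equiv.natSumNatEquivNat (.inr m))

end LinearMap

/-- Mackey's theorem: a nondegenerate pairing of two countably infinite-dimensional
vector spaces admits dual bases. -/
theorem stmt_0 (K : Type*) [Field K] (V W : Type*)
    [AddCommGroup V] [Module K V] [AddCommGroup W] [Module K W]
    (hV : Nonempty (Module.Basis ℕ K V)) (hW : Nonempty (Module.Basis ℕ K W))
    (p : V →ₗ[K] W →ₗ[K] K)
    (hpl : ∀ v : V, (∀ w : W, p v w = 0) → v = 0)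
    (hpr : ∀ w : W, (∀ v : V, p v w = 0) → w = 0) :
    ∃ (bV : Module.Basis ℕ K V) (bW : Module.Basis ℕ K W),
      ∀ α β : ℕ, p (bV α) (bW β) = if α = β then 1 else 0 := by
  obtain ⟨e⟩ := hV
  obtain ⟨f⟩ := hW
  obtain ⟨v, w, hvw, hev, hfw⟩ := p.exists_isBiorthogonal_forall_mem_span
    (Module.not_finite_of_infinite_basis e) (Module.not_finite_of_infinite_basis f)
    ⟨hpl, hpr⟩ e f
  refine ⟨.mk hvw.linearIndependent_left (e.span_eq ▸ hev),
    .mk hvw.linearIndependent_right (f.span_eq ▸ hfw), fun α β => ?_⟩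
  rw [Module.Basis.mk_apply, Module.Basis.mk_apply]
  exact hvw α β
end

section
/- Let 𝔊 be a Lie algebra over a field K and I ⊆ 𝔊 an ideal. Let U and U' be 𝔊/I-modules (regarded as 𝔊-modules on which I acts trivially), and let W be a 𝔊-module such that: (i) I acts densely on W, meaning for any finitely many w_1,…,w_n ∈ W and any g ∈ 𝔊 there is g' ∈ I with g'w_i = gw_i for all i; (ii) W is irreducible as an I-module; (iii) End_I(W) = K (every I-module endomorphism of W is a scalar). Then every 𝔊-module homomorphism f : U ⊗ W → U' ⊗ W is of the form g ⊗ id_W for a unique 𝔊-module homomorphism g : U → U'; in particular Hom_𝔊(U ⊗ W, U' ⊗ W) ≅ Hom_𝔊(U, U'). -/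
/-!
Since `I` kills `U` and `U'`, `f` commutes with `id ⊗ x` for `x ∈ I`, so for `u ∈ U` and a
functional `ψ` on `U'` the slice `w ↦ (ψ ⊗ id) f (u ⊗ w)` is an `I`-endomorphism of `W`, i.e. a
scalar `c(u, ψ)`. Fixing `w₀` and `χ` with `χ w₀ = 1`, the map `g u := (id ⊗ χ) f (u ⊗ w₀)`
satisfies `ψ (g u) = c(u, ψ)`, and as the functionals on `U'` separate `U' ⊗ W`, `f = g ⊗ id`.
Equivariance and uniqueness of `g` follow because `g ↦ g ⊗ id` is injective when `W ≠ 0`.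
-/

open TensorProduct LinearMap Module

section Contraction

variable {R V W : Type*} [CommRing R] [AddCommGroup V] [Module R V] [AddCommGroup W] [Module R W]

noncomputable def contractFst (ψ : Dual R V) : V ⊗[R] W →ₗ[R] W :=
  TensorProduct.lid R W ∘ₗ ψ.rTensor W

@[simp]
lemma contractFst_tmul (ψ : Dual R V) (v : V) (w : W) : contractFst ψ (v ⊗ₜ w) = ψ v • w := by
  simp [contractFst]

lemma contractFst_lTensor (ψ : Dual R V) (A : Module.End R W) (t : V ⊗[R] W) :
    contractFst ψ (A.lTensor V t) = A (contractFst ψ t) := by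
  induction t using TensorProduct.induction_on with
  | zero => simp
  | tmul v w => simp
  | add t₁ t₂ h₁ h₂ => simp only [map_add, h₁, h₂]

lemma apply_rid_lTensor (ψ : Dual R V) (χ : Dual R W) (t : V ⊗[R] W) :
    ψ (TensorProduct.rid R V (χ.lTensor V t)) = χ (contractFst ψ t) := by
  induction t using TensorProduct.induction_on with
  | zero => simp
  | tmul v w => simp [mul_comm]
  | add t₁ t₂ h₁ h₂ => simp only [map_add, h₁, h₂]

/-- In the coordinates `V ⊗ W ≃ ι →₀ W` given by a basis of `V`, the components of `t` are its
contractions against the coordinate functionals. -/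
lemma eq_zero_of_forall_contractFst_eq_zero [Module.Free R V] {t : V ⊗[R] W}
    (h : ∀ ψ : Dual R V, contractFst ψ t = 0) : t = 0 := by
  let b := Module.Free.chooseBasis R V
  suffices finsuppScalarLeft R W _ (LinearEquiv.rTensor W b.repr t) = 0 by
    simpa using this
  ext i
  rw [finsuppScalarLeft_apply, Finsupp.zero_apply, ← h (b.coord i), contractFst, comp_apply,
    Basis.coord, rTensor_comp_apply]
  rfl

end Contraction

section Field

variable {K U U' W : Type*} [Field K] [AddCommGroup U] [Module K U] [AddCommGroup U'] [Module K U']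
  [AddCommGroup W] [Module K W]

lemma exists_dual_apply_eq_one [Nontrivial W] : ∃ (w : W) (χ : Dual K W), χ w = 1 := by
  obtain ⟨w, hw⟩ := exists_ne (0 : W)
  obtain ⟨χ, hχ⟩ : ∃ χ : Dual K W, χ w ≠ 0 := by
    by_contra! h
    exact hw ((Module.forall_dual_apply_eq_zero_iff K w).mp h)
  exact ⟨w, (χ w)⁻¹ • χ, by simp [inv_mul_cancel₀ hχ]⟩

lemma rTensor_injective_left [Nontrivial W] :
    Function.Injective (fun g : U →ₗ[K] U' => g.rTensor W) := by
  obtain ⟨w, χ, hχ⟩ := exists_dual_apply_eq_one (K := K) (W := W)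
  intro g g' h
  ext u
  simpa [hχ] using congr(TensorProduct.rid K U' (χ.lTensor U' ($h (u ⊗ₜ w))))

lemma comp_eq_of_rTensor_intertwines [Nontrivial W] {g : U →ₗ[K] U'} {A : Module.End K U}
    {A' : Module.End K U'} {B : Module.End K W}
    (h : g.rTensor W ∘ₗ (A.rTensor W + B.lTensor U) = (A'.rTensor W + B.lTensor U') ∘ₗ g.rTensor W) :
    g ∘ₗ A = A' ∘ₗ g := by
  apply rTensor_injective_left (W := W)
  simpa only [comp_add, add_comp, rTensor_comp, rTensor_comp_lTensor, lTensor_comp_rTensor,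
    add_left_inj] using h

theorem exists_eq_rTensor_of_commute_lTensor [Nontrivial W] {ι : Type*}
    (ρ : ι → Module.End K W) (hρ : ∀ φ : Module.End K W, (∀ i, Commute φ (ρ i)) → ∃ c : K, φ = c • 1)
    (f : U ⊗[K] W →ₗ[K] U' ⊗[K] W) (hf : ∀ i, f ∘ₗ (ρ i).lTensor U = (ρ i).lTensor U' ∘ₗ f) :
    ∃ g : U →ₗ[K] U', f = g.rTensor W := by
  obtain ⟨w₀, χ, hχ⟩ := exists_dual_apply_eq_one (K := K) (W := W)
  have slice_scalar : ∀ (u : U) (ψ : Dual K U'), ∃ c : K, ∀ w, contractFst ψ (f (u ⊗ₜ w)) = c • w := by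
    intro u ψ
    obtain ⟨c, hc⟩ := hρ (contractFst ψ ∘ₗ f ∘ₗ TensorProduct.mk K U W u) fun i => by
      ext w
      simpa [contractFst_lTensor] using congr(contractFst ψ ($(hf i) (u ⊗ₜ w)))
    exact ⟨c, fun w => by simpa using congr($hc w)⟩
  let g : U →ₗ[K] U' :=
    TensorProduct.rid K U' ∘ₗ χ.lTensor U' ∘ₗ f ∘ₗ (TensorProduct.mk K U W).flip w₀
  refine ⟨g, TensorProduct.ext' fun u w => ?_⟩
  rw [rTensor_tmul, ← sub_eq_zero]
  refine eq_zero_of_forall_contractFst_eq_zero fun ψ => ?_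
  obtain ⟨c, hc⟩ := slice_scalar u ψ
  have hgu : ψ (g u) = c := by simp [g, apply_rid_lTensor, hc, hχ]
  simp [hc, hgu]

end Field

theorem stmt_2_general (K : Type*) [Field K]
    (L : Type*) [LieRing L] [LieAlgebra K L] (I : LieIdeal K L)
    (U U' W : Type*)
    [AddCommGroup U] [Module K U] [LieRingModule L U] [LieModule K L U]
    [AddCommGroup U'] [Module K U'] [LieRingModule L U'] [LieModule K L U']
    [AddCommGroup W] [Module K W] [LieRingModule L W] [LieModule K L W]
    -- `I` acts trivially on `U` and `U'`:
    (hU : ∀ x : L, x ∈ I → ∀ u : U, ⁅x, u⁆ = 0)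
    (hU' : ∀ x : L, x ∈ I → ∀ u : U', ⁅x, u⁆ = 0)
    -- `W` is irreducible as an `I`-module:
    (hW : Nontrivial W)
    -- `End_I(W) = K`:
    (hend : ∀ φ : W →ₗ[K] W, (∀ x : L, x ∈ I → ∀ w : W, φ ⁅x, w⁆ = ⁅x, φ w⁆) →
      ∃ c : K, φ = c • LinearMap.id)
    -- a `𝔊`-module homomorphism `f : U ⊗ W → U' ⊗ W`:
    (f : U ⊗[K] W →ₗ[K] U' ⊗[K] W)
    (hf : ∀ g : L,
      f ∘ₗ (TensorProduct.map (LieModule.toEnd K L U g) LinearMap.id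
              + TensorProduct.map LinearMap.id (LieModule.toEnd K L W g))
        = (TensorProduct.map (LieModule.toEnd K L U' g) LinearMap.id
              + TensorProduct.map LinearMap.id (LieModule.toEnd K L W g)) ∘ₗ f) :
    ∃! g : U →ₗ[K] U',
      (∀ (x : L) (u : U), g ⁅x, u⁆ = ⁅x, g u⁆) ∧
        f = TensorProduct.map g LinearMap.id := by
  have hI : ∀ x : I, f ∘ₗ (LieModule.toEnd K L W x).lTensor U =
      (LieModule.toEnd K L W x).lTensor U' ∘ₗ f := by
    intro ⟨x, hx⟩
    have hUx : LieModule.toEnd K L U x = 0 := LinearMap.ext (hU x hx)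
    have hU'x : LieModule.toEnd K L U' x = 0 := LinearMap.ext (hU' x hx)
    simpa [hUx, hU'x, TensorProduct.map_zero_left, lTensor_def] using hf x
  have hcomm : ∀ φ : Module.End K W, (∀ x : I, Commute φ (LieModule.toEnd K L W x)) →
      ∃ c : K, φ = c • 1 :=
    fun φ hφ => hend φ fun x hx w => congr($(hφ ⟨x, hx⟩) w)
  obtain ⟨g, rfl⟩ := exists_eq_rTensor_of_commute_lTensor _ hcomm f hI
  refine ⟨g, ⟨fun x u => congr($(comp_eq_of_rTensor_intertwines (hf x)) u), rfl⟩, ?_⟩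
  rintro g' ⟨-, hg'⟩
  exact rTensor_injective_left hg'.symm

/-- Let `𝔊` be a Lie algebra over `K` (char 0) and `I ⊆ 𝔊` an ideal; let `U`, `U'` be
`𝔊`-modules on which `I` acts trivially (i.e. `𝔊/I`-modules) and `W` a `𝔊`-module on
which `I` acts densely and irreducibly with `End_I(W) = K`. Then every `𝔊`-module map
`f : U ⊗ W → U' ⊗ W` equals `g ⊗ id_W` for a unique `𝔊`-module map `g : U → U'`. -/
theorem stmt_2 (K : Type*) [Field K] [CharZero K]
    (L : Type*) [LieRing L] [LieAlgebra K L] (I : LieIdeal K L)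
    (U U' W : Type*)
    [AddCommGroup U] [Module K U] [LieRingModule L U] [LieModule K L U]
    [AddCommGroup U'] [Module K U'] [LieRingModule L U'] [LieModule K L U']
    [AddCommGroup W] [Module K W] [LieRingModule L W] [LieModule K L W]
    -- `I` acts trivially on `U` and `U'`:
    (hU : ∀ x : L, x ∈ I → ∀ u : U, ⁅x, u⁆ = 0)
    (hU' : ∀ x : L, x ∈ I → ∀ u : U', ⁅x, u⁆ = 0)
    -- `I` acts densely on `W`:
    (hdense : ∀ (n : ℕ) (w : Fin n → W) (g : L), ∃ g' : L, g' ∈ I ∧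
      ∀ i : Fin n, ⁅g', w i⁆ = ⁅g, w i⁆)
    -- `W` is irreducible as an `I`-module:
    (hW : Nontrivial W)
    (hirr : ∀ p : Submodule K W, (∀ x : L, x ∈ I → ∀ w ∈ p, ⁅x, w⁆ ∈ p) →
      p = ⊥ ∨ p = ⊤)
    -- `End_I(W) = K`:
    (hend : ∀ φ : W →ₗ[K] W, (∀ x : L, x ∈ I → ∀ w : W, φ ⁅x, w⁆ = ⁅x, φ w⁆) →
      ∃ c : K, φ = c • LinearMap.id)
    -- a `𝔊`-module homomorphism `f : U ⊗ W → U' ⊗ W`: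
    (f : U ⊗[K] W →ₗ[K] U' ⊗[K] W)
    (hf : ∀ g : L,
      f ∘ₗ (TensorProduct.map (LieModule.toEnd K L U g) LinearMap.id
              + TensorProduct.map LinearMap.id (LieModule.toEnd K L W g))
        = (TensorProduct.map (LieModule.toEnd K L U' g) LinearMap.id
              + TensorProduct.map LinearMap.id (LieModule.toEnd K L W g)) ∘ₗ f) :
    ∃! g : U →ₗ[K] U',
      (∀ (x : L) (u : U), g ⁅x, u⁆ = ⁅x, g u⁆) ∧
        f = TensorProduct.map g LinearMap.id :=
  stmt_2_general K L I U U' W hU hU' hW hend f hf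
end

section
/- Let K be a field, and consider row vectors indexed by ℤ_{>0} with entries in K, i.e. the space V^* of all functions ℤ_{>0} → K, with subspace V_* of finitely supported functions. Let W = V^*/V_*. Similarly let V̄ be all column vectors ℤ_{>0} → K, with subspace V of finitely supported ones, and N = V̄/V. Suppose v_1,…,v_n ∈ W are linearly independent, w_1,…,w_n ∈ N are linearly independent, and v_1',…,v_n' ∈ W, w_1',…,w_n' ∈ N are arbitrary. Then there exists a row-column-finite matrix g (i.e. g : ℤ_{>0}×ℤ_{>0} → K with finitely many nonzero entries in each row and each column) such that, with g acting on W by v ↦ −vg and on N by w ↦ gw, one has g·v_i = v_i' and g·w_i = w_i' for all i = 1,…,n. -/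
/-!
Look for `g = A + B` with `A` strictly lower and `B` strictly upper triangular, and solve
`v_i g = -v'_i` and `g w_i = w'_i` exactly, building column `t` of `A` and row `t` of `B` by
recursion on `t`. The equation for column `t` of `v_i g` involves column `t` of `A` and entries of
`B` in rows `< t`, which are already fixed; so it asks for a finitely supported `x`, supported
beyond `t`, with prescribed values of `∑ r, v_i r x_r`. Such an `x` exists because linear
independence modulo finitely supported vectors survives cutting off any initial segment, so the
columns `(v_i r)_i` with `r > t` span `Kⁿ`. Rows are symmetric, and each row or column of `g` is a
finite part of `A` or `B` plus `t` entries on the other side of the diagonal.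
-/

open scoped BigOperators

/-- A matrix is row-column-finite if every row and every column has finite support. -/
def RowColFinite {K : Type*} [Field K] (g : ℕ → ℕ → K) : Prop :=
  (∀ i : ℕ, (Function.support fun j => g i j).Finite) ∧
    (∀ j : ℕ, (Function.support fun i => g i j).Finite)

/-- The subspace of finitely supported vectors inside the space of all vectors. -/
def finSupp (K : Type*) [Field K] : Submodule K (ℕ → K) where
  carrier := {v | (Function.support v).Finite}
  add_mem' := by
    intro a b ha hb
    exact ((ha.union hb).subset (Function.support_add _ _))
  zero_mem' := by simp [Function.support_zero]
  smul_mem' := by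
    intro c v hv
    refine hv.subset fun x hx h => hx ?_
    simp only [Pi.smul_apply, h, smul_zero]

section

open Finset Function

variable {K : Type*} [Field K]

section TailColumns

variable {ι : Type*} [Fintype ι] {v : ι → ℕ → K}

theorem span_tail_columns_eq_top
    (hv : LinearIndependent K fun i => Submodule.Quotient.mk (p := finSupp K) (v i)) (M : ℕ) :
    Submodule.span K ((fun r i => v i r) '' Set.Ioi M) = ⊤ := by
  classical
  rw [← Submodule.dualAnnihilator_eq_bot_iff, eq_bot_iff]
  intro φ hφ
  have hφ_col : ∀ r, M < r → φ (fun i => v i r) = 0 := fun r hr =>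
    (Submodule.mem_dualAnnihilator φ).1 hφ _ (Submodule.subset_span ⟨r, hr, rfl⟩)
  set c : ι → K := fun i => φ fun j => if i = j then 1 else 0
  have hφ_eq : ∀ u, φ u = ∑ i, u i * c i := fun u => φ.pi_apply_eq_sum_univ u
  have hc : c = 0 := by
    refine funext (Fintype.linearIndependent_iff.1 hv c ?_)
    have hsupp : (support (∑ i, c i • v i)).Finite := by
      refine (Set.finite_Iic M).subset fun r hr => Set.mem_Iic.2 <| not_lt.1 fun hMr => hr ?_
      simpa [mul_comm, hφ_eq] using hφ_col r hMr
    have hmk : ∑ i, c i • Submodule.Quotient.mk (p := finSupp K) (v i) =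
        (finSupp K).mkQ (∑ i, c i • v i) := by simp
    rw [hmk, Submodule.mkQ_apply, Submodule.Quotient.mk_eq_zero]
    exact hsupp
  ext u
  simp [hφ_eq, hc]

theorem exists_finsupp_tail_finsum_eq
    (hv : LinearIndependent K fun i => Submodule.Quotient.mk (p := finSupp K) (v i))
    (M : ℕ) (b : ι → K) :
    ∃ x : ℕ →₀ K, ↑x.support ⊆ Set.Ioi M ∧ ∀ i, ∑ᶠ r, v i r * x r = b i := by
  obtain ⟨x, hx, hxb⟩ := (Finsupp.mem_span_image_iff_linearCombination K).1
    ((span_tail_columns_eq_top hv M).symm ▸ Submodule.mem_top : b ∈ _)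
  refine ⟨x, hx, fun i => ?_⟩
  rw [← hxb, finsum_eq_sum_of_support_subset _ (s := x.support) fun r hr => ?_]
  · simp [Finsupp.linearCombination_apply, Finsupp.sum, mul_comm]
  · exact Finsupp.mem_support_iff.2 (right_ne_zero_of_mul hr)

end TailColumns

section LowerUpper

variable (a b : ℕ → ℕ →₀ K)

/-- `a j` is the part of column `j` below the diagonal and `b k` the part of row `k` right of it. -/
def ofLowerUpper (k j : ℕ) : K := a j k + b k j

theorem ofLowerUpper_swap (k j : ℕ) : ofLowerUpper b a j k = ofLowerUpper a b k j :=
  add_comm _ _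

variable {a b}

theorem support_col_ofLowerUpper_subset (hb : ∀ k, ↑(b k).support ⊆ Set.Ioi k) (j : ℕ) :
    support (ofLowerUpper a b · j) ⊆ ↑((a j).support ∪ range j) := by
  intro k hk
  by_contra hkj
  simp only [coe_union, Set.mem_union, mem_coe, Finsupp.mem_support_iff, coe_range,
    Set.mem_Iio, not_or, not_not, not_lt] at hkj
  have hbkj : b k j = 0 := Finsupp.notMem_support_iff.1 fun h => (hb k h).not_ge hkj.2
  exact hk (by simp [ofLowerUpper, hkj.1, hbkj])

theorem rowColFinite_ofLowerUpper (ha : ∀ j, ↑(a j).support ⊆ Set.Ioi j)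
    (hb : ∀ k, ↑(b k).support ⊆ Set.Ioi k) : RowColFinite (ofLowerUpper a b) :=
  ⟨fun k => (finite_toSet _).subset <| by
      simpa only [ofLowerUpper_swap] using support_col_ofLowerUpper_subset ha k,
    fun j => (finite_toSet _).subset (support_col_ofLowerUpper_subset hb j)⟩

theorem finsum_mul_ofLowerUpper (hb : ∀ k, ↑(b k).support ⊆ Set.Ioi k) (x : ℕ → K) (j : ℕ) :
    ∑ᶠ k, x k * ofLowerUpper a b k j = ∑ᶠ k, x k * a j k + ∑ k ∈ range j, x k * b k j := by
  have hlower : (support fun k => x k * a j k).Finite :=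
    Set.Finite.subset (a j).hasFiniteSupport (support_mul_subset_right _ _)
  have hupper : support (fun k => x k * b k j) ⊆ ↑(range j) := fun k hk =>
    mem_range.2 (hb k (Finsupp.mem_support_iff.2 (right_ne_zero_of_mul hk)))
  simp only [ofLowerUpper, mul_add]
  rw [finsum_add_distrib hlower ((range j).finite_toSet.subset hupper),
    finsum_eq_sum_of_support_subset _ hupper]

theorem finsum_ofLowerUpper_mul (ha : ∀ j, ↑(a j).support ⊆ Set.Ioi j) (y : ℕ → K) (k : ℕ) :
    ∑ᶠ j, ofLowerUpper a b k j * y j = ∑ᶠ j, y j * b k j + ∑ j ∈ range k, y j * a j k := by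
  simp only [← ofLowerUpper_swap a b, mul_comm _ (y _)]
  exact finsum_mul_ofLowerUpper ha y k

end LowerUpper

section Construction

variable {ι : Type*} (v w v' w' : ι → ℕ → K) (solveV solveW : ℕ → (ι → K) → ℕ →₀ K)

/-- The pair `(a t, b t)` of the matrix `ofLowerUpper a b` solving `v g = v'` and `g w = w'`, when
`solveV M c` is supported beyond `M` with `∑ᶠ r, v i r * solveV M c r = c i` (likewise `solveW`). -/
noncomputable def lowerUpperStage : ℕ → (ℕ →₀ K) × (ℕ →₀ K)
  | t =>
    (solveV t fun i => v' i t - ∑ s : Fin t, v i s * (lowerUpperStage s).2 t,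
      solveW t fun i => w' i t - ∑ s : Fin t, w i s * (lowerUpperStage s).1 t)

theorem lowerUpperStage_eq (t : ℕ) :
    lowerUpperStage v w v' w' solveV solveW t =
      (solveV t fun i =>
          v' i t - ∑ s ∈ range t, v i s * (lowerUpperStage v w v' w' solveV solveW s).2 t,
        solveW t fun i =>
          w' i t - ∑ s ∈ range t, w i s * (lowerUpperStage v w v' w' solveV solveW s).1 t) := by
  rw [lowerUpperStage]
  simp only [Finset.sum_range]

omit solveV solveW in
theorem exists_rowColFinite_finsum_eq
    (hv : ∀ (M : ℕ) (c : ι → K), ∃ x : ℕ →₀ K, ↑x.support ⊆ Set.Ioi M ∧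
      ∀ i, ∑ᶠ r, v i r * x r = c i)
    (hw : ∀ (M : ℕ) (c : ι → K), ∃ y : ℕ →₀ K, ↑y.support ⊆ Set.Ioi M ∧
      ∀ i, ∑ᶠ r, w i r * y r = c i) :
    ∃ g : ℕ → ℕ → K, RowColFinite g ∧ (∀ i j, ∑ᶠ k, v i k * g k j = v' i j) ∧
      ∀ i k, ∑ᶠ j, g k j * w i j = w' i k := by
  choose solveV hsolveV_support hsolveV using hv
  choose solveW hsolveW_support hsolveW using hw
  set S := lowerUpperStage v w v' w' solveV solveW with hS
  have ha : ∀ t, ↑(S t).1.support ⊆ Set.Ioi t := fun t => by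
    rw [hS, lowerUpperStage_eq]; exact hsolveV_support _ _
  have hb : ∀ t, ↑(S t).2.support ⊆ Set.Ioi t := fun t => by
    rw [hS, lowerUpperStage_eq]; exact hsolveW_support _ _
  have hcol : ∀ i j, ∑ᶠ k, v i k * (S j).1 k = v' i j - ∑ k ∈ range j, v i k * (S k).2 j :=
    fun i j => by rw [hS, lowerUpperStage_eq]; exact hsolveV _ _ i
  have hrow : ∀ i k, ∑ᶠ j, w i j * (S k).2 j = w' i k - ∑ j ∈ range k, w i j * (S j).1 k :=
    fun i k => by rw [hS, lowerUpperStage_eq]; exact hsolveW _ _ i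
  refine ⟨ofLowerUpper (fun t => (S t).1) (fun t => (S t).2), rowColFinite_ofLowerUpper ha hb,
    fun i j => ?_, fun i k => ?_⟩
  · rw [finsum_mul_ofLowerUpper hb, hcol, sub_add_cancel]
  · rw [finsum_ofLowerUpper_mul ha, hrow, sub_add_cancel]

end Construction

end

/-- Given linearly independent images `v₁,…,vₙ` in `W = V^*/V_*` and `w₁,…,wₙ` in
`N = V̄/V`, and arbitrary targets `v₁',…,vₙ'` and `w₁',…,wₙ'`, there is a
row-column-finite matrix `g`, acting on `W` by `v ↦ -vg` and on `N` by `w ↦ gw`,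
with `g·vᵢ = vᵢ'` and `g·wᵢ = wᵢ'` for all `i`. -/
theorem stmt_3 (K : Type*) [Field K] (n : ℕ)
    (v v' w w' : Fin n → (ℕ → K))
    (hv : LinearIndependent K
      (fun i => Submodule.Quotient.mk (p := finSupp K) (v i)))
    (hw : LinearIndependent K
      (fun i => Submodule.Quotient.mk (p := finSupp K) (w i))) :
    ∃ g : ℕ → ℕ → K, RowColFinite g ∧
      (∀ i : Fin n,
        Submodule.Quotient.mk (p := finSupp K) (fun j => -(∑ᶠ k : ℕ, v i k * g k j)) =
          Submodule.Quotient.mk (p := finSupp K) (v' i)) ∧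
      (∀ i : Fin n,
        Submodule.Quotient.mk (p := finSupp K) (fun k => ∑ᶠ j : ℕ, g k j * w i j) =
          Submodule.Quotient.mk (p := finSupp K) (w' i)) := by
  obtain ⟨g, hg, hcol, hrow⟩ := exists_rowColFinite_finsum_eq v w (-v') w'
    (exists_finsupp_tail_finsum_eq hv) (exists_finsupp_tail_finsum_eq hw)
  refine ⟨g, hg, fun i => congrArg _ (funext fun j => ?_), fun i => congrArg _ (funext (hrow i))⟩
  rw [hcol, Pi.neg_apply, Pi.neg_apply, neg_neg]
end

section
/- Let I be the set of triples (m,n,p) of nonnegative integers with the partial order generated by the covering relations (m,n−1,p−1) < (m,n,p) (for n,p ≥ 1) and (m+1,n−1,p) < (m,n,p) (for n ≥ 1). Then (m,n,p) ≤ (m',n',p') in this order if and only if m ≥ m', n ≤ n', p ≤ p', m+n ≤ m'+n', and m+n−p = m'+n'−p'. -/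
/-- The covering relations: `(m,n,p) < (m,n+1,p+1)` (contraction) and
`(m+1,n,p) < (m,n+1,p)` (projection `V^* → V^*/V_*`). -/
def CoverStep (a b : ℕ × ℕ × ℕ) : Prop :=
  (∃ m n p : ℕ, a = (m, n, p) ∧ b = (m, n + 1, p + 1)) ∨
    (∃ m n p : ℕ, a = (m + 1, n, p) ∧ b = (m, n + 1, p))

/-- The explicit partial order: `m ≥ m'`, `n ≤ n'`, `p ≤ p'`, `m+n ≤ m'+n'` and
`m+n−p = m'+n'−p'` (as integers). -/
def TripleLe (a b : ℕ × ℕ × ℕ) : Prop :=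
  b.1 ≤ a.1 ∧ a.2.1 ≤ b.2.1 ∧ a.2.2 ≤ b.2.2 ∧ a.1 + a.2.1 ≤ b.1 + b.2.1 ∧
    (a.1 : ℤ) + a.2.1 - a.2.2 = (b.1 : ℤ) + b.2.1 - b.2.2

private lemma key : ∀ (k m n p m' n' p' : ℕ), n' = n + k → m' ≤ m → p ≤ p' →
    m + n ≤ m' + n' → (m : ℤ) + n - p = (m' : ℤ) + n' - p' →
    Relation.ReflTransGen CoverStep (m, n, p) (m', n', p') := by
  intro k
  induction k with
  | zero =>
    intro m n p m' n' p' hn h1 h2 h3 h4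
    obtain rfl : n' = n := by omega
    obtain rfl : m' = m := by omega
    obtain rfl : p' = p := by omega
    exact Relation.ReflTransGen.refl
  | succ k ih =>
    intro m n p m' n' p' hn h1 h2 h3 h4
    by_cases hp : p < p'
    · exact Relation.ReflTransGen.head
        (Or.inl ⟨m, n, p, rfl, rfl⟩)
        (ih m (n + 1) (p + 1) m' n' p' (by omega) h1 (by omega) (by omega) (by push_cast; omega))
    · have hm : m' < m := by omega
      obtain ⟨m'', rfl⟩ : ∃ m'', m = m'' + 1 := ⟨m - 1, by omega⟩
      exact Relation.ReflTransGen.head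
        (Or.inr ⟨m'', n, p, rfl, rfl⟩)
        (ih m'' (n + 1) p m' n' p' (by omega) (by omega) h2 (by omega) (by push_cast; omega))

/-- The partial order generated by the covering relations coincides with
the explicit order given by the five inequalities/equality. -/
theorem stmt_7 (a b : ℕ × ℕ × ℕ) :
    Relation.ReflTransGen CoverStep a b ↔ TripleLe a b := by
  constructor
  · intro h
    induction h with
    | refl => exact ⟨le_refl _, le_refl _, le_refl _, le_refl _, rfl⟩
    | tail _ hstep ih =>
      obtain ⟨h1, h2, h3, h4, h5⟩ := ih
      rcases hstep with ⟨m, n, p, rfl, rfl⟩ | ⟨m, n, p, rfl, rfl⟩ <;>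
        refine ⟨by simp_all <;> omega, by simp_all <;> omega, by simp_all <;> omega,
          by simp_all <;> omega, by simp_all <;> (push_cast at *; omega)⟩
  · rintro ⟨h1, h2, h3, h4, h5⟩
    obtain ⟨m, n, p⟩ := a
    obtain ⟨m', n', p'⟩ := b
    exact key (n' - n) m n p m' n' p' (by simp_all <;> omega) h1 h3 h4 h5
end
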